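/- (Soundness of parallel execution.) Let {J_r}_{r ∈ R} be a finite family of subsets of the agent set J (every agent keeps the same trajectory), and let {φ_r}_{r ∈ R} be CaTL formulas. If (s_{J_r}, 0) ⊨ φ_r for every r ∈ R, then (s_J, 0) ⊨ ⋀_{r ∈ R} φ_r, i.e., the full team trajectory satisfies the conjunction of all the sub-specifications at time 0. -/

import Mathlib

open scoped Classical

/-- A CaTL task `T = (d, π, cp_T, cp)`: a duration, an atomic proposition, a nonempty
finite set of required capabilities, and a counting map. -/
structure CTask (AP Cap : Type) where
  dur : ℕ
  prop : AP
  cpT : Finset Cap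
  cpT_nonempty : cpT.Nonempty
  cp : Cap → ℤ

/-- CaTL formulas: `φ ::= T | φ₁ ∧ φ₂ | φ₁ ∨ φ₂ | φ₁ U_[a,b] φ₂ | F_[a,b] φ | G_[a,b] φ`
with `a ≤ b`. -/
inductive CaTL (AP Cap : Type) : Type where
  | task (T : CTask AP Cap)
  | and (φ₁ φ₂ : CaTL AP Cap)
  | or (φ₁ φ₂ : CaTL AP Cap)
  | untl (a b : ℕ) (hab : a ≤ b) (φ₁ φ₂ : CaTL AP Cap)
  | ev (a b : ℕ) (hab : a ≤ b) (φ : CaTL AP Cap)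
  | alw (a b : ℕ) (hab : a ≤ b) (φ : CaTL AP Cap)

variable {Q AP Cap J : Type}

/-- `n_{q,c}^{J'}(t)`: the number of agents `j ∈ J'` with `s j t = some q` and `c ∈ Cap_j`. -/
noncomputable def nAgents (caps : J → Finset Cap) (s : J → ℕ → Option Q)
    (J' : Finset J) (q : Q) (c : Cap) (t : ℕ) : ℕ :=
  (J'.filter (fun j => s j t = some q ∧ c ∈ caps j)).card

/-- Qualitative CaTL semantics: `(s_{J'}, t) ⊨ φ`. -/
def sat (L : Q → Set AP) (caps : J → Finset Cap) (s : J → ℕ → Option Q)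
    (J' : Finset J) : CaTL AP Cap → ℕ → Prop
  | .task T, t => ∀ τ, t ≤ τ → τ < t + T.dur → ∀ q, T.prop ∈ L q → ∀ c ∈ T.cpT,
      (T.cp c : ℤ) ≤ (nAgents caps s J' q c τ : ℤ)
  | .and φ₁ φ₂, t => sat L caps s J' φ₁ t ∧ sat L caps s J' φ₂ t
  | .or φ₁ φ₂, t => sat L caps s J' φ₁ t ∨ sat L caps s J' φ₂ t
  | .untl a b _ φ₁ φ₂, t => ∃ t', t + a ≤ t' ∧ t' ≤ t + b ∧ sat L caps s J' φ₂ t' ∧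
      ∀ τ, t ≤ τ → τ ≤ t' → sat L caps s J' φ₁ τ
  | .ev a b _ φ, t => ∃ τ, t + a ≤ τ ∧ τ ≤ t + b ∧ sat L caps s J' φ τ
  | .alw a b _ φ, t => ∀ τ, t + a ≤ τ → τ ≤ t + b → sat L caps s J' φ τ

/-- The conjunction `⋀` of a nonempty list of CaTL formulas `φ :: φs`. -/
def bigConj : CaTL AP Cap → List (CaTL AP Cap) → CaTL AP Cap
  | φ, [] => φ
  | φ, ψ :: l => .and φ (bigConj ψ l)

-- Tasks only bound agent counts from below and CaTL has no negation, so enlarging the team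
-- preserves satisfaction; each `J_r ⊆ J` then hands its `φ_r` to the full team.
theorem sat_mono {L : Q → Set AP} {caps : J → Finset Cap} {s : J → ℕ → Option Q}
    {J' J'' : Finset J} (hJ : J' ⊆ J'') {φ : CaTL AP Cap} {t : ℕ}
    (h : sat L caps s J' φ t) : sat L caps s J'' φ t := by
  induction φ generalizing t with
  | task T =>
    intro τ hτ₁ hτ₂ q hq c hc
    refine (h τ hτ₁ hτ₂ q hq c hc).trans ?_
    exact_mod_cast Finset.card_le_card (Finset.filter_subset_filter _ hJ)
  | and φ₁ φ₂ ih₁ ih₂ => exact ⟨ih₁ h.1, ih₂ h.2⟩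
  | or φ₁ φ₂ ih₁ ih₂ => exact h.imp ih₁ ih₂
  | untl a b hab φ₁ φ₂ ih₁ ih₂ =>
    obtain ⟨t', ht'₁, ht'₂, hφ₂, hφ₁⟩ := h
    exact ⟨t', ht'₁, ht'₂, ih₂ hφ₂, fun τ hτ₁ hτ₂ => ih₁ (hφ₁ τ hτ₁ hτ₂)⟩
  | ev a b hab φ ih =>
    obtain ⟨τ, hτ₁, hτ₂, hφ⟩ := h
    exact ⟨τ, hτ₁, hτ₂, ih hφ⟩
  | alw a b hab φ ih => exact fun τ hτ₁ hτ₂ => ih (h τ hτ₁ hτ₂)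

theorem sat_bigConj_iff {L : Q → Set AP} {caps : J → Finset Cap} {s : J → ℕ → Option Q}
    {J' : Finset J} {t : ℕ} (φ : CaTL AP Cap) (φs : List (CaTL AP Cap)) :
    sat L caps s J' (bigConj φ φs) t ↔ ∀ ψ ∈ φ :: φs, sat L caps s J' ψ t := by
  induction φs generalizing φ with
  | nil => simp [bigConj]
  | cons ψ φs ih => simp only [bigConj, sat, ih, List.forall_mem_cons]

/-- The finite family `{(J_r, φ_r)}_{r ∈ R}` is encoded as the nonempty list `p :: ps`. -/
theorem parallel_execution_sound_general [Fintype J]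
    (L : Q → Set AP) (caps : J → Finset Cap) (s : J → ℕ → Option Q)
    (p : Finset J × CaTL AP Cap) (ps : List (Finset J × CaTL AP Cap))
    (h : ∀ r ∈ p :: ps, sat L caps s r.1 r.2 0) :
    sat L caps s Finset.univ (bigConj p.2 (ps.map Prod.snd)) 0 := by
  rw [sat_bigConj_iff, ← List.map_cons, List.forall_mem_map]
  exact fun r hr => sat_mono r.1.subset_univ (h r hr)

/-- soundness of parallel execution.  If each subteam `J_r` satisfies its
sub-specification `φ_r` at time `0`, then the full team satisfies the conjunction
`⋀_r φ_r` at time `0`.  The (nonempty, finite) family of subteam/sub-specification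
pairs is given as the list `p :: ps`. -/
theorem parallel_execution_sound [Fintype Q] [Fintype Cap] [Fintype J]
    (L : Q → Set AP) (caps : J → Finset Cap) (s : J → ℕ → Option Q)
    (p : Finset J × CaTL AP Cap) (ps : List (Finset J × CaTL AP Cap))
    (h : ∀ r ∈ p :: ps, sat L caps s r.1 r.2 0) :
    sat L caps s Finset.univ (bigConj p.2 (ps.map Prod.snd)) 0 :=
  parallel_execution_sound_general L caps s p ps h
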